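/- Let a, c ∈ (−1,1) \ {0} and set ā² = 1 − a², c̄² = 1 − c². For the confounder SCM with these coefficients, the population R² of the hub node B given (A, C) is 1 − ā²c̄²/(ā² + c̄² − ā²c̄²), and this expression tends to 1 as either ā → 0 or c̄ → 0, i.e., the R² of the hub of a confounder can be made arbitrarily close to 1. -/

import Mathlib

/-!
The residual `B - αA - γC` is a linear combination of the independent standard Gaussians
`U_A, U_B, U_C`, so its mean square is `(1 - αa - γc)² + α²ā² + γ²c̄²`. By Cauchy–Schwarz the
least value of this quadratic is `ā²c̄² / (ā²c̄² + a²c̄² + c²ā²)`, which is the stated one since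
`a² = 1 - ā²` and `c² = 1 - c̄²`. The limits hold because the expression is continuous at `0`
with value `1` there.
-/

open MeasureTheory ProbabilityTheory Filter Set
open scoped Topology

section
variable {Ω : Type*} [MeasurableSpace Ω] {μ : Measure Ω}

lemma integral_sq_sum_mul_eq_sum_sq_mul_variance [IsFiniteMeasure μ] {ι : Type*} [Fintype ι]
    {U : ι → Ω → ℝ} (hL2 : ∀ i, MemLp (U i) 2 μ) (hmean : ∀ i, μ[U i] = 0)
    (hind : Pairwise fun i j => U i ⟂ᵢ[μ] U j) (w : ι → ℝ) :
    ∫ ω, (∑ i, w i * U i ω) ^ 2 ∂μ = ∑ i, w i ^ 2 * Var[U i; μ] := by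
  have hL2w : ∀ i, MemLp (fun ω => w i * U i ω) 2 μ := fun i => (hL2 i).const_mul (w i)
  have hmean_sum : μ[fun ω => ∑ i, w i * U i ω] = 0 := by
    rw [integral_finsetSum _ fun i _ => (hL2w i).integrable one_le_two]
    simp [integral_const_mul, hmean]
  have hind_w : Set.Pairwise (Finset.univ : Finset ι) fun i j =>
      (fun ω => w i * U i ω) ⟂ᵢ[μ] (fun ω => w j * U j ω) := fun i _ j _ hij =>
    (hind hij).comp (measurable_const_mul (w i)) (measurable_const_mul (w j))
  rw [← variance_of_integral_eq_zero
      (memLp_finsetSum _ fun i _ => hL2w i).aemeasurable hmean_sum,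
    ← Finset.sum_fn, IndepFun.variance_sum (fun i _ => hL2w i) hind_w]
  simp only [variance_const_mul]

lemma integral_sq_sum_mul_of_hasLaw_gaussianReal [IsProbabilityMeasure μ] {ι : Type*} [Fintype ι]
    {U : ι → Ω → ℝ} (hU : ∀ i, HasLaw (U i) (gaussianReal 0 1) μ)
    (hind : Pairwise fun i j => U i ⟂ᵢ[μ] U j) (w : ι → ℝ) :
    ∫ ω, (∑ i, w i * U i ω) ^ 2 ∂μ = ∑ i, w i ^ 2 := by
  rw [integral_sq_sum_mul_eq_sum_sq_mul_variance (fun i => (hU i).hasGaussianLaw.memLp_two)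
    (fun i => by rw [(hU i).integral_eq, integral_id_gaussianReal]) hind]
  simp [(hU _).variance_eq, variance_id_gaussianReal]
end

/-- The lower bound is Lagrange's identity for `(1 - αa - γc, α√u, γ√v)` and `(√(uv), a√v, c√u)`,
whose inner product is `√(uv)`; equality holds at `(α, γ) = (av, cu) / (uv + a²v + c²u)`. -/
lemma isLeast_residual_quadratic (a c u v : ℝ) (hu : 0 < u) (hv : 0 < v) :
    IsLeast {e : ℝ | ∃ α γ : ℝ, e = (1 - α * a - γ * c) ^ 2 + α ^ 2 * u + γ ^ 2 * v}
      (u * v / (u * v + a ^ 2 * v + c ^ 2 * u)) := by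
  have hD : 0 < u * v + a ^ 2 * v + c ^ 2 * u := by positivity
  constructor
  · refine ⟨a * v / (u * v + a ^ 2 * v + c ^ 2 * u), c * u / (u * v + a ^ 2 * v + c ^ 2 * u), ?_⟩
    field_simp
    ring
  · rintro e ⟨α, γ, rfl⟩
    rw [div_le_iff₀ hD]
    nlinarith [mul_nonneg hv.le (sq_nonneg ((1 - α * a - γ * c) * a - α * u)),
      mul_nonneg hu.le (sq_nonneg ((1 - α * a - γ * c) * c - γ * v)),
      sq_nonneg (α * c * u - γ * a * v)]

lemma tendsto_one_sub_sq_mul_sq_div (y : ℝ) (hy : y ≠ 0) :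
    Tendsto (fun x : ℝ => 1 - x ^ 2 * y ^ 2 / (x ^ 2 + y ^ 2 - x ^ 2 * y ^ 2)) (𝓝 0) (𝓝 1) := by
  have hcont : ContinuousAt (fun x : ℝ => 1 - x ^ 2 * y ^ 2 / (x ^ 2 + y ^ 2 - x ^ 2 * y ^ 2)) 0 :=
    continuousAt_const.sub <| (by fun_prop : ContinuousAt _ _).div (by fun_prop) (by simpa using hy)
  simpa using hcont.tendsto

theorem confounder_hub_R2_to_one_general
    {Ω : Type*} [MeasurableSpace Ω] (μ : Measure Ω) [IsProbabilityMeasure μ]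
    (a c : ℝ) (ha : a ∈ Set.Ioo (-1 : ℝ) 1) (hc : c ∈ Set.Ioo (-1 : ℝ) 1)
    (abar cbar : ℝ) (habar : abar = Real.sqrt (1 - a ^ 2))
    (hcbar : cbar = Real.sqrt (1 - c ^ 2))
    (UA UB UC A B C : Ω → ℝ)
    (hmeas : ∀ i, Measurable (![UA, UB, UC] i))
    (hindep : iIndepFun ![UA, UB, UC] μ)
    (hgauss : ∀ i, Measure.map (![UA, UB, UC] i) μ = gaussianReal 0 1)
    (hBdef : B = UB)
    (hAdef : A = fun ω => a * B ω + abar * UA ω)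
    (hCdef : C = fun ω => c * B ω + cbar * UC ω) :
    (1 - sInf {e : ℝ | ∃ α γ : ℝ, e = ∫ ω, (B ω - α * A ω - γ * C ω) ^ 2 ∂μ} =
      1 - abar ^ 2 * cbar ^ 2 / (abar ^ 2 + cbar ^ 2 - abar ^ 2 * cbar ^ 2)) ∧
    (∀ y ∈ Set.Ioo (0 : ℝ) 1,
      Tendsto (fun x : ℝ => 1 - x ^ 2 * y ^ 2 / (x ^ 2 + y ^ 2 - x ^ 2 * y ^ 2))
        (nhdsWithin 0 (Ioi 0)) (nhds 1)) ∧
    (∀ x ∈ Set.Ioo (0 : ℝ) 1,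
      Tendsto (fun y : ℝ => 1 - x ^ 2 * y ^ 2 / (x ^ 2 + y ^ 2 - x ^ 2 * y ^ 2))
        (nhdsWithin 0 (Ioi 0)) (nhds 1)) := by
  have habar2 : abar ^ 2 = 1 - a ^ 2 := by
    rw [habar, Real.sq_sqrt (by nlinarith [ha.1, ha.2])]
  have hcbar2 : cbar ^ 2 = 1 - c ^ 2 := by
    rw [hcbar, Real.sq_sqrt (by nlinarith [hc.1, hc.2])]
  have hresidual : ∀ α γ : ℝ, ∫ ω, (B ω - α * A ω - γ * C ω) ^ 2 ∂μ
      = (1 - α * a - γ * c) ^ 2 + α ^ 2 * abar ^ 2 + γ ^ 2 * cbar ^ 2 := by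
    intro α γ
    have hlin : ∀ ω, B ω - α * A ω - γ * C ω
        = ∑ i, ![-(α * abar), 1 - α * a - γ * c, -(γ * cbar)] i * ![UA, UB, UC] i ω := by
      intro ω
      simp only [hBdef, hAdef, hCdef, Fin.sum_univ_three, Matrix.cons_val_zero,
        Matrix.cons_val_one, Matrix.cons_val]
      ring
    simp_rw [hlin]
    rw [integral_sq_sum_mul_of_hasLaw_gaussianReal (fun i => ⟨(hmeas i).aemeasurable, hgauss i⟩)
      (fun i j hij => hindep.indepFun hij)]
    simp only [Fin.sum_univ_three, Matrix.cons_val_zero, Matrix.cons_val_one, Matrix.cons_val]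
    ring
  refine ⟨?_, fun y hy => ?_, fun x hx => ?_⟩
  · simp_rw [hresidual]
    rw [(isLeast_residual_quadratic a c _ _ (habar2 ▸ by nlinarith [ha.1, ha.2])
      (hcbar2 ▸ by nlinarith [hc.1, hc.2])).csInf_eq]
    congr 2
    linear_combination cbar ^ 2 * habar2 + abar ^ 2 * hcbar2
  · exact (tendsto_one_sub_sq_mul_sq_div y hy.1.ne').mono_left nhdsWithin_le_nhds
  · exact ((tendsto_one_sub_sq_mul_sq_div x hx.1.ne').mono_left nhdsWithin_le_nhds).congr
      fun t => by ring

/-- For the confounder SCM with coefficients `a, c ∈ (−1,1) \ {0}` and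
`ā = √(1−a²)`, `c̄ = √(1−c²)`, the population `R²` of the hub node `B` given
`(A, C)` is `1 − ā²c̄²/(ā² + c̄² − ā²c̄²)`, and this expression tends to `1` as
`ā → 0⁺` or as `c̄ → 0⁺`: the `R²` of the hub of a confounder can be arbitrarily
close to `1`. -/
theorem confounder_hub_R2_to_one
    {Ω : Type*} [MeasurableSpace Ω] (μ : Measure Ω) [IsProbabilityMeasure μ]
    (a c : ℝ) (ha : a ∈ Set.Ioo (-1 : ℝ) 1) (hc : c ∈ Set.Ioo (-1 : ℝ) 1)
    (ha0 : a ≠ 0) (hc0 : c ≠ 0)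
    (abar cbar : ℝ) (habar : abar = Real.sqrt (1 - a ^ 2))
    (hcbar : cbar = Real.sqrt (1 - c ^ 2))
    (UA UB UC A B C : Ω → ℝ)
    (hmeas : ∀ i, Measurable (![UA, UB, UC] i))
    (hindep : iIndepFun ![UA, UB, UC] μ)
    (hgauss : ∀ i, Measure.map (![UA, UB, UC] i) μ = gaussianReal 0 1)
    (hBdef : B = UB)
    (hAdef : A = fun ω => a * B ω + abar * UA ω)
    (hCdef : C = fun ω => c * B ω + cbar * UC ω) :
    (1 - sInf {e : ℝ | ∃ α γ : ℝ, e = ∫ ω, (B ω - α * A ω - γ * C ω) ^ 2 ∂μ} =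
      1 - abar ^ 2 * cbar ^ 2 / (abar ^ 2 + cbar ^ 2 - abar ^ 2 * cbar ^ 2)) ∧
    (∀ y ∈ Set.Ioo (0 : ℝ) 1,
      Tendsto (fun x : ℝ => 1 - x ^ 2 * y ^ 2 / (x ^ 2 + y ^ 2 - x ^ 2 * y ^ 2))
        (nhdsWithin 0 (Ioi 0)) (nhds 1)) ∧
    (∀ x ∈ Set.Ioo (0 : ℝ) 1,
      Tendsto (fun y : ℝ => 1 - x ^ 2 * y ^ 2 / (x ^ 2 + y ^ 2 - x ^ 2 * y ^ 2))
        (nhdsWithin 0 (Ioi 0)) (nhds 1)) :=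
  confounder_hub_R2_to_one_general μ a c ha hc abar cbar habar hcbar UA UB UC A B C hmeas hindep
    hgauss hBdef hAdef hCdef
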